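/- arXiv:0805.2654 — 3 statements merged into one kernel-verified Lean document; each statement's English description precedes it below -/
import Mathlib

section
/- Let 0 < α, p, q be real numbers with p + 1 < q(1+α), and let δ > 0. Then there exist constants c, C > 0 and h₀ > 0 such that for all 0 < h < h₀, c · h^((p+1)/(1+α) − q) ≤ ∫_{-δ}^{δ} |x|^p / (h + |x|^(1+α))^q dx ≤ C · h^((p+1)/(1+α) − q). -/
open MeasureTheory Set

/-!
The integrand is even, so it suffices to integrate over `(0, δ)`. Put `h = m ^ (1 + α)`, so
`m < δ`. On `(0, m)` the denominator lies between `h ^ q` and `(2h) ^ q`, so this piece is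
comparable to `m ^ (p + 1) / h ^ q`. On `(m, δ)` the denominator dominates `x ^ ((1 + α) q)`,
and since `p + 1 < q (1 + α)` the integral of `x ^ (p - (1 + α) q)` over `(m, ∞)` is at most a
constant times `m ^ (p + 1 - (1 + α) q)`. Both scales equal `h ^ ((p + 1) / (1 + α) - q)`.
-/

theorem setIntegral_Ioo_neg_comp_abs (f : ℝ → ℝ) (c : ℝ) :
    ∫ x in Ioo (-c) c, f |x| = 2 * ∫ x in Ioo 0 c, f x := by
  have hind : (Ioo (-c) c).indicator (fun x => f |x|) = fun x => (Iio c).indicator f |x| := by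
    ext x
    simp only [indicator, mem_Ioo, mem_Iio, ← abs_lt]
  rw [← integral_indicator measurableSet_Ioo, hind, integral_comp_abs,
    setIntegral_indicator measurableSet_Iio, Ioi_inter_Iio]

theorem integral_rpow_zero_left {p : ℝ} (hp : -1 < p) (b : ℝ) :
    ∫ x in 0..b, x ^ p = b ^ (p + 1) / (p + 1) := by
  rw [integral_rpow (Or.inl hp), Real.zero_rpow (by linarith), sub_zero]

/-- The integrand `t ^ p / (h + t ^ β) ^ q` on `t ≥ 0`, with `h = m ^ β`. -/
noncomputable def drainageKernel (p q β m t : ℝ) : ℝ := t ^ p / (m ^ β + t ^ β) ^ q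

namespace drainageKernel

variable {p q β m t : ℝ}

theorem nonneg (hm : 0 ≤ m) (ht : 0 ≤ t) : 0 ≤ drainageKernel p q β m t := by
  unfold drainageKernel; positivity

theorem rpow_div_le (hβ : 0 < β) (hq : 0 ≤ q) (hm : 0 < m) (ht : 0 ≤ t) (htm : t ≤ m) :
    t ^ p / (2 ^ q * m ^ (β * q)) ≤ drainageKernel p q β m t := by
  have hsum : m ^ β + t ^ β ≤ 2 * m ^ β := by
    linarith [Real.rpow_le_rpow ht htm hβ.le]
  rw [drainageKernel, Real.rpow_mul hm.le, ← Real.mul_rpow zero_le_two (by positivity)]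
  gcongr

theorem le_rpow_div (hm : 0 < m) (hq : 0 ≤ q) (ht : 0 ≤ t) :
    drainageKernel p q β m t ≤ t ^ p / m ^ (β * q) := by
  rw [drainageKernel, Real.rpow_mul hm.le]
  gcongr
  exact le_add_of_nonneg_right (by positivity)

theorem le_rpow (hm : 0 ≤ m) (hq : 0 ≤ q) (ht : 0 < t) :
    drainageKernel p q β m t ≤ t ^ (p - β * q) := by
  rw [drainageKernel, Real.rpow_sub ht, Real.rpow_mul ht.le]
  gcongr
  exact le_add_of_nonneg_left (by positivity)

theorem intervalIntegrable (hp : -1 < p) (hq : 0 ≤ q) (hm : 0 < m) {a b : ℝ} (ha : 0 ≤ a)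
    (hb : 0 ≤ b) : IntervalIntegrable (drainageKernel p q β m) volume a b := by
  refine ((intervalIntegral.intervalIntegrable_rpow' hp).div_const (m ^ (β * q))).mono_fun
    (Measurable.aestronglyMeasurable (by unfold drainageKernel; fun_prop))
    (ae_restrict_of_forall_mem measurableSet_uIoc ?_)
  intro t ht
  have ht0 : 0 < t := (le_min ha hb).trans_lt ht.1
  dsimp only
  rw [Real.norm_of_nonneg (nonneg hm.le ht0.le), Real.norm_of_nonneg (by positivity)]
  exact le_rpow_div hm hq ht0.le

theorem integral_near_ge (hp : -1 < p) (hβ : 0 < β) (hq : 0 ≤ q) (hm : 0 < m) :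
    m ^ (p + 1 - β * q) / ((p + 1) * 2 ^ q) ≤ ∫ t in 0..m, drainageKernel p q β m t := by
  calc m ^ (p + 1 - β * q) / ((p + 1) * 2 ^ q)
        = ∫ t in 0..m, t ^ p / (2 ^ q * m ^ (β * q)) := by
        rw [intervalIntegral.integral_div, integral_rpow_zero_left hp, Real.rpow_sub hm]
        field_simp
    _ ≤ _ := intervalIntegral.integral_mono_on hm.le
      ((intervalIntegral.intervalIntegrable_rpow' hp).div_const _)
      (intervalIntegrable hp hq hm le_rfl hm.le) fun t ht => rpow_div_le hβ hq hm ht.1 ht.2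

theorem integral_near_le (hp : -1 < p) (hq : 0 ≤ q) (hm : 0 < m) :
    ∫ t in 0..m, drainageKernel p q β m t ≤ m ^ (p + 1 - β * q) / (p + 1) := by
  calc ∫ t in 0..m, drainageKernel p q β m t ≤ ∫ t in 0..m, t ^ p / m ^ (β * q) :=
        intervalIntegral.integral_mono_on hm.le (intervalIntegrable hp hq hm le_rfl hm.le)
          ((intervalIntegral.intervalIntegrable_rpow' hp).div_const _)
          fun t ht => le_rpow_div hm hq ht.1
    _ = m ^ (p + 1 - β * q) / (p + 1) := by
        rw [intervalIntegral.integral_div, integral_rpow_zero_left hp, Real.rpow_sub hm]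
        field_simp

theorem integral_far_le (hp : -1 < p) (hq : 0 ≤ q) (hpq : p + 1 < β * q) (hm : 0 < m)
    {δ : ℝ} (hmδ : m ≤ δ) :
    ∫ t in m..δ, drainageKernel p q β m t ≤ m ^ (p + 1 - β * q) / (β * q - p - 1) := by
  have h0 : (0 : ℝ) ∉ uIcc m δ := by
    rw [uIcc_of_le hmδ]; exact fun h => h.1.not_gt hm
  calc ∫ t in m..δ, drainageKernel p q β m t ≤ ∫ t in m..δ, t ^ (p - β * q) :=
        intervalIntegral.integral_mono_on hmδ
          (intervalIntegrable hp hq hm hm.le (hm.le.trans hmδ))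
          (intervalIntegral.intervalIntegrable_rpow (Or.inr h0))
          fun t ht => le_rpow hm.le hq (hm.trans_le ht.1)
    _ = (m ^ (p + 1 - β * q) - δ ^ (p + 1 - β * q)) / (β * q - p - 1) := by
        rw [integral_rpow (Or.inr ⟨by linarith, h0⟩), ← neg_div_neg_eq]
        ring_nf
    _ ≤ m ^ (p + 1 - β * q) / (β * q - p - 1) := by
        gcongr
        · linarith
        · exact sub_le_self _ (Real.rpow_nonneg (hm.le.trans hmδ) _)

theorem integral_bounds (hp : -1 < p) (hβ : 0 < β) (hq : 0 ≤ q) (hpq : p + 1 < β * q)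
    (hm : 0 < m) {δ : ℝ} (hmδ : m ≤ δ) :
    m ^ (p + 1 - β * q) / ((p + 1) * 2 ^ q) ≤ ∫ t in 0..δ, drainageKernel p q β m t ∧
      ∫ t in 0..δ, drainageKernel p q β m t ≤
        m ^ (p + 1 - β * q) / (p + 1) + m ^ (p + 1 - β * q) / (β * q - p - 1) := by
  rw [← intervalIntegral.integral_add_adjacent_intervals
    (intervalIntegrable hp hq hm le_rfl hm.le)
    (intervalIntegrable hp hq hm hm.le (hm.le.trans hmδ))]
  have hfar : 0 ≤ ∫ t in m..δ, drainageKernel p q β m t :=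
    intervalIntegral.integral_nonneg hmδ fun t ht => nonneg hm.le (hm.le.trans ht.1)
  constructor
  · linarith [integral_near_ge hp hβ hq hm]
  · linarith [integral_near_le (β := β) hp hq hm, integral_far_le hp hq hpq hm hmδ]

end drainageKernel

theorem drainage_integral_case_i (α p q δ : ℝ) (hα : 0 < α) (hp : 0 < p) (hq : 0 < q)
    (hpq : p + 1 < q * (1 + α)) (hδ : 0 < δ) :
    ∃ c C h₀ : ℝ, 0 < c ∧ 0 < C ∧ 0 < h₀ ∧
      ∀ h : ℝ, 0 < h → h < h₀ →
        c * h ^ ((p + 1) / (1 + α) - q) ≤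
          (∫ x in Ioo (-δ) δ, |x| ^ p / (h + |x| ^ (1 + α)) ^ q) ∧
        (∫ x in Ioo (-δ) δ, |x| ^ p / (h + |x| ^ (1 + α)) ^ q) ≤
          C * h ^ ((p + 1) / (1 + α) - q) := by
  set β := 1 + α
  have hβ : 0 < β := by positivity
  have hgap : 0 < β * q - p - 1 := by linarith
  refine ⟨2 / ((p + 1) * 2 ^ q), 2 * (1 / (p + 1) + 1 / (β * q - p - 1)), δ ^ β,
    by positivity, by positivity, by positivity, ?_⟩
  intro h hh hhδ
  obtain ⟨m, hm, rfl⟩ : ∃ m, 0 < m ∧ m ^ β = h :=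
    ⟨h ^ β⁻¹, by positivity, Real.rpow_inv_rpow hh.le hβ.ne'⟩
  have hmδ : m ≤ δ := ((Real.rpow_lt_rpow_iff hm.le hδ.le hβ).1 hhδ).le
  have hexp : (m ^ β) ^ ((p + 1) / β - q) = m ^ (p + 1 - β * q) := by
    rw [← Real.rpow_mul hm.le]; congr 1; field_simp
  have hsym : ∫ x in Ioo (-δ) δ, |x| ^ p / (m ^ β + |x| ^ β) ^ q =
      2 * ∫ t in 0..δ, drainageKernel p q β m t := by
    rw [setIntegral_Ioo_neg_comp_abs (fun t => t ^ p / (m ^ β + t ^ β) ^ q),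
      intervalIntegral.integral_of_le hδ.le, integral_Ioc_eq_integral_Ioo]
    rfl
  obtain ⟨hlow, hupp⟩ :=
    drainageKernel.integral_bounds (p := p) (by linarith) hβ hq.le (by linarith) hm hmδ
  rw [hsym, hexp]
  exact ⟨by linear_combination 2 * hlow, by linear_combination 2 * hupp⟩
end

section
/- Let 0 < α, p, q be real numbers with p + 1 = q(1+α), and let δ > 0. Then there exist constants c, C > 0 and h₀ ∈ (0,1) such that for all 0 < h < h₀, c · |log h| ≤ ∫_{-δ}^{δ} |x|^p / (h + |x|^(1+α))^q dx ≤ C · |log h|. -/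
open MeasureTheory Set

/-!
Write β = 1 + α, so that p + 1 = β q, and split the integral at a = h^(1/β), the point where
x^β balances h. By evenness it is twice the integral over (0, δ). On (0, a) the integrand is at
most x^p / h^q, whose integral is a^(p+1) / ((p+1) h^q) = 1/(p+1) by the balance condition. On
(a, δ) the denominator lies between x^(βq) and (2x^β)^q, so the integrand is comparable to 1/x and
the integral to log(δ/a) = log δ + |log h| / β, up to the factor 2^q.
-/

theorem Function.Even.integral_Ioo_neg_eq_two_mul {E : Type*} [NormedAddCommGroup E]
    [NormedSpace ℝ E] {f : ℝ → E} (hf : Function.Even f) {δ : ℝ} (hδ : 0 ≤ δ)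
    (hint : IntervalIntegrable f volume 0 δ) :
    ∫ x in Ioo (-δ) δ, f x = (2 : ℝ) • ∫ x in 0..δ, f x := by
  have hint_neg : IntervalIntegrable f volume (-δ) 0 := by
    simpa only [hf _, neg_neg, neg_zero] using
      (IntervalIntegrable.iff_comp_neg (f := f) |>.1 hint).symm
  have hneg : ∫ x in -δ..0, f x = ∫ x in 0..δ, f x := by
    simpa only [hf _, neg_zero] using (intervalIntegral.integral_comp_neg (a := 0) (b := δ) f).symm
  rw [← integral_Ioc_eq_integral_Ioo, ← intervalIntegral.integral_of_le (by linarith),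
    ← intervalIntegral.integral_add_adjacent_intervals hint_neg hint, hneg, two_smul]

section

variable {β p q h x : ℝ}

lemma rpow_div_rpow_rpow_eq_inv (hpq : p + 1 = β * q) (hx : 0 < x) :
    x ^ p / (x ^ β) ^ q = x⁻¹ := by
  rw [← Real.rpow_mul hx.le, ← Real.rpow_sub hx, show p - β * q = -1 by linarith,
    Real.rpow_neg_one]

lemma rpow_div_add_rpow_rpow_le_inv (hq : 0 ≤ q) (hpq : p + 1 = β * q) (hh : 0 ≤ h)
    (hx : 0 < x) : x ^ p / (h + x ^ β) ^ q ≤ x⁻¹ := by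
  calc x ^ p / (h + x ^ β) ^ q ≤ x ^ p / (x ^ β) ^ q := by gcongr; linarith
    _ = x⁻¹ := rpow_div_rpow_rpow_eq_inv hpq hx

lemma two_rpow_neg_mul_inv_le (hq : 0 ≤ q) (hpq : p + 1 = β * q) (hh : 0 ≤ h)
    (hhx : h ≤ x ^ β) (hx : 0 < x) : 2 ^ (-q) * x⁻¹ ≤ x ^ p / (h + x ^ β) ^ q := by
  calc 2 ^ (-q) * x⁻¹ = x ^ p / (2 * x ^ β) ^ q := by
        rw [Real.mul_rpow zero_le_two (by positivity), ← div_div, div_right_comm,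
          rpow_div_rpow_rpow_eq_inv hpq hx, Real.rpow_neg zero_le_two, div_eq_inv_mul]
    _ ≤ x ^ p / (h + x ^ β) ^ q := by gcongr; linarith

lemma intervalIntegrable_rpow_div_add_rpow_rpow (hp : 0 ≤ p) (hβ : 0 ≤ β) (hh : 0 < h)
    {a b : ℝ} (ha : 0 ≤ a) (hb : 0 ≤ b) :
    IntervalIntegrable (fun x ↦ x ^ p / (h + x ^ β) ^ q) volume a b := by
  have hden : ∀ x ∈ uIcc a b, 0 < h + x ^ β := fun x hx ↦
    add_pos_of_pos_of_nonneg hh (Real.rpow_nonneg ((le_min ha hb).trans hx.1) β)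
  refine ContinuousOn.intervalIntegrable (ContinuousOn.div ?_ ?_ ?_)
  · exact continuousOn_id.rpow_const fun _ _ ↦ Or.inr hp
  · exact (continuousOn_const.add (continuousOn_id.rpow_const fun _ _ ↦ Or.inr hβ)).rpow_const
      fun x hx ↦ Or.inl (hden x hx).ne'
  · exact fun x hx ↦ (Real.rpow_pos_of_pos (hden x hx) q).ne'

lemma intervalIntegral_rpow_div_add_rpow_rpow_le_inv_add_one (hp : 0 ≤ p) (hq : 0 ≤ q)
    (hβ : 0 < β) (hpq : p + 1 = β * q) (hh : 0 < h) :
    ∫ x in 0..h ^ β⁻¹, x ^ p / (h + x ^ β) ^ q ≤ (p + 1)⁻¹ := by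
  have ha : 0 ≤ h ^ β⁻¹ := Real.rpow_nonneg hh.le _
  have hpow : (h ^ β⁻¹) ^ (p + 1) = h ^ q := by
    rw [← Real.rpow_mul hh.le, hpq, inv_mul_cancel_left₀ hβ.ne']
  calc ∫ x in 0..h ^ β⁻¹, x ^ p / (h + x ^ β) ^ q ≤ ∫ x in 0..h ^ β⁻¹, x ^ p / h ^ q := by
        refine intervalIntegral.integral_mono_on ha
          (intervalIntegrable_rpow_div_add_rpow_rpow hp hβ.le hh le_rfl ha)
          ((intervalIntegral.intervalIntegrable_rpow' (by linarith)).div_const _) fun x hx ↦ ?_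
        have := Real.rpow_nonneg hx.1 β
        have := Real.rpow_nonneg hx.1 p
        gcongr
        linarith
    _ = (p + 1)⁻¹ := by
        rw [intervalIntegral.integral_div, integral_rpow (Or.inl (by linarith)),
          Real.zero_rpow (by linarith), sub_zero, hpow]
        field_simp

lemma intervalIntegrable_inv_of_pos {a b : ℝ} (ha : 0 < a) (hab : a ≤ b) :
    IntervalIntegrable (fun x ↦ x⁻¹) volume a b :=
  intervalIntegrable_inv_iff.2 <| Or.inr <| by
    rw [uIcc_of_le hab]
    exact fun h0 ↦ ha.not_ge h0.1

lemma intervalIntegral_rpow_div_add_rpow_rpow_le_log (hp : 0 ≤ p) (hq : 0 ≤ q) (hβ : 0 ≤ β)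
    (hpq : p + 1 = β * q) (hh : 0 < h) {a b : ℝ} (ha : 0 < a) (hab : a ≤ b) :
    ∫ x in a..b, x ^ p / (h + x ^ β) ^ q ≤ Real.log (b / a) := by
  rw [← integral_inv_of_pos ha (ha.trans_le hab)]
  exact intervalIntegral.integral_mono_on hab
    (intervalIntegrable_rpow_div_add_rpow_rpow hp hβ hh ha.le (ha.le.trans hab))
    (intervalIntegrable_inv_of_pos ha hab)
    fun x hx ↦ rpow_div_add_rpow_rpow_le_inv hq hpq hh.le (ha.trans_le hx.1)

lemma two_rpow_neg_mul_log_le_intervalIntegral (hp : 0 ≤ p) (hq : 0 ≤ q) (hβ : 0 ≤ β)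
    (hpq : p + 1 = β * q) (hh : 0 < h) {a b : ℝ} (ha : 0 < a) (hab : a ≤ b) (hha : h ≤ a ^ β) :
    2 ^ (-q) * Real.log (b / a) ≤ ∫ x in a..b, x ^ p / (h + x ^ β) ^ q := by
  rw [← integral_inv_of_pos ha (ha.trans_le hab), ← intervalIntegral.integral_const_mul]
  exact intervalIntegral.integral_mono_on hab ((intervalIntegrable_inv_of_pos ha hab).const_mul _)
    (intervalIntegrable_rpow_div_add_rpow_rpow hp hβ hh ha.le (ha.le.trans hab))
    fun x hx ↦ two_rpow_neg_mul_inv_le hq hpq hh.le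
      (hha.trans (Real.rpow_le_rpow ha.le hx.1 hβ)) (ha.trans_le hx.1)

theorem intervalIntegral_rpow_div_add_rpow_rpow_mem_Icc (hp : 0 ≤ p) (hq : 0 ≤ q) (hβ : 0 < β)
    (hpq : p + 1 = β * q) (hh : 0 < h) {δ : ℝ} (hδ : 0 < δ) (hhδ : h ≤ δ ^ β) :
    ∫ x in 0..δ, x ^ p / (h + x ^ β) ^ q ∈
      Icc (2 ^ (-q) * Real.log (δ / h ^ β⁻¹)) ((p + 1)⁻¹ + Real.log (δ / h ^ β⁻¹)) := by
  set a := h ^ β⁻¹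
  have ha : 0 < a := Real.rpow_pos_of_pos hh _
  have haδ : a ≤ δ := (Real.rpow_inv_le_iff_of_pos hh.le hδ.le hβ).2 hhδ
  have haβ : a ^ β = h := Real.rpow_inv_rpow hh.le hβ.ne'
  have hsplit := intervalIntegral.integral_add_adjacent_intervals
    (intervalIntegrable_rpow_div_add_rpow_rpow (q := q) hp hβ.le hh le_rfl ha.le)
    (intervalIntegrable_rpow_div_add_rpow_rpow hp hβ.le hh ha.le hδ.le)
  have hinner_nonneg : 0 ≤ ∫ x in 0..a, x ^ p / (h + x ^ β) ^ q :=
    intervalIntegral.integral_nonneg ha.le fun x hx ↦ by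
      have := Real.rpow_nonneg hx.1 β
      have := Real.rpow_nonneg hx.1 p
      positivity
  rw [← hsplit]
  constructor
  · linarith [two_rpow_neg_mul_log_le_intervalIntegral hp hq hβ.le hpq hh ha haδ haβ.ge]
  · linarith [intervalIntegral_rpow_div_add_rpow_rpow_le_inv_add_one hp hq hβ hpq hh,
      intervalIntegral_rpow_div_add_rpow_rpow_le_log hp hq hβ.le hpq hh ha haδ]

end

theorem exists_abs_log_bounds_of_affine_bounds {F : ℝ → ℝ} {h₁ A₁ B₁ A₂ B₂ : ℝ} (hh₁ : 0 < h₁)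
    (hB₁ : 0 < B₁) (hF : ∀ h, 0 < h → h < h₁ →
      A₁ + B₁ * -Real.log h ≤ F h ∧ F h ≤ A₂ + B₂ * -Real.log h) :
    ∃ c C h₀ : ℝ, 0 < c ∧ 0 < C ∧ 0 < h₀ ∧ h₀ < 1 ∧
      ∀ h : ℝ, 0 < h → h < h₀ → c * |Real.log h| ≤ F h ∧ F h ≤ C * |Real.log h| := by
  -- Once `-log h > M`, the term `B₁ * (-log h) / 2` absorbs `|A₁|`.
  set M := 1 + 2 * |A₁| / B₁
  have hM : 1 ≤ M := le_add_of_nonneg_right (by positivity)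
  refine ⟨B₁ / 2, |A₂| + |B₂| + 1, min h₁ (Real.exp (-M)), by positivity, by positivity,
    lt_min hh₁ (Real.exp_pos _), (min_le_right _ _).trans_lt (Real.exp_lt_one_iff.2 (by linarith)),
    fun h hh hh₀ ↦ ?_⟩
  obtain ⟨hlow, hup⟩ := hF h hh (hh₀.trans_le (min_le_left _ _))
  have hML : M < -Real.log h := by
    linarith [(Real.log_lt_iff_lt_exp hh).2 (hh₀.trans_le (min_le_right _ _))]
  rw [abs_of_neg (by linarith)]
  have hBM : B₁ * M = B₁ + 2 * |A₁| := by rw [mul_add, mul_one, mul_div_cancel₀ _ hB₁.ne']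
  constructor
  · nlinarith [neg_abs_le A₁, mul_lt_mul_of_pos_left hML hB₁]
  · nlinarith [le_abs_self A₂, le_abs_self B₂, abs_nonneg A₂, abs_nonneg B₂]

theorem drainage_integral_case_ii (α p q δ : ℝ) (hα : 0 < α) (hp : 0 < p) (hq : 0 < q)
    (hpq : p + 1 = q * (1 + α)) (hδ : 0 < δ) :
    ∃ c C h₀ : ℝ, 0 < c ∧ 0 < C ∧ 0 < h₀ ∧ h₀ < 1 ∧
      ∀ h : ℝ, 0 < h → h < h₀ →
        c * |Real.log h| ≤ (∫ x in Ioo (-δ) δ, |x| ^ p / (h + |x| ^ (1 + α)) ^ q) ∧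
        (∫ x in Ioo (-δ) δ, |x| ^ p / (h + |x| ^ (1 + α)) ^ q) ≤ C * |Real.log h| := by
  have hβ : 0 < 1 + α := by linarith
  refine exists_abs_log_bounds_of_affine_bounds (h₁ := δ ^ (1 + α))
    (A₁ := 2 * 2 ^ (-q) * Real.log δ) (B₁ := 2 * 2 ^ (-q) * (1 + α)⁻¹)
    (A₂ := 2 * ((p + 1)⁻¹ + Real.log δ)) (B₂ := 2 * (1 + α)⁻¹)
    (Real.rpow_pos_of_pos hδ _) (by positivity) fun h hh hhδ ↦ ?_
  have hlog : Real.log (δ / h ^ (1 + α)⁻¹) = Real.log δ + (1 + α)⁻¹ * -Real.log h := by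
    rw [Real.log_div hδ.ne' (Real.rpow_pos_of_pos hh _).ne', Real.log_rpow hh]
    ring
  have heven : Function.Even fun x : ℝ ↦ |x| ^ p / (h + |x| ^ (1 + α)) ^ q := fun x ↦ by
    simp only [abs_neg]
  have habs : EqOn (fun x : ℝ ↦ |x| ^ p / (h + |x| ^ (1 + α)) ^ q)
      (fun x ↦ x ^ p / (h + x ^ (1 + α)) ^ q) (uIcc 0 δ) := fun x hx ↦ by
    rw [uIcc_of_le hδ.le] at hx
    simp only [abs_of_nonneg hx.1]
  have hint := intervalIntegrable_rpow_div_add_rpow_rpow (q := q) hp.le hβ.le hh le_rfl hδ.le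
  rw [heven.integral_Ioo_neg_eq_two_mul hδ.le
      ((intervalIntegrable_congr (habs.mono uIoc_subset_uIcc)).2 hint),
    intervalIntegral.integral_congr habs, smul_eq_mul]
  obtain ⟨hlow, hup⟩ := intervalIntegral_rpow_div_add_rpow_rpow_mem_Icc hp.le hq.le hβ
    (by linarith) hh hδ hhδ.le
  rw [hlog] at hlow hup
  constructor <;> linarith
end

section
/- Let α ∈ (0,1], δ > 0, γ_h(x₁) = h + |x₁|^{1+α}, and φ_h as above on Ω_{h,δ}. Then there is C > 0 independent of h such that for all small h > 0, sup_{x₁ ∈ (−δ,δ)} γ_h(x₁)^{3/2} ( ∫₀^{γ_h(x₁)} |∇w_h(x₁, x₂)|² dx₂ )^{1/2} ≤ C, where w_h = ∇⊥(x₁ φ_h). -/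
open MeasureTheory Set

/-!
Along the fibre over `x₁` write `g = γ_h(x₁)` and `τ = x₂ / g ∈ (0, 1)`. Then
`x₁ φ_h = x₁ S(τ)` with `S(τ) = τ²(3 - 2τ)`, and `w_h = (A S'(τ), S(τ) + B τ S'(τ))` with
`A = -x₁ / g` and `B = -x₁ γ_h' / g`. Since `x₁ γ_h'(x₁) = (1 + α)|x₁|^{1+α} ≤ 2g`, and `g`, `γ_h'`
stay bounded for `|x₁| < δ`, `h < 1`, we get `|A|, |B| ≲ 1/g` and `|A'|, |B'| ≲ 1/g²`. Every first
partial of `w_h` is such a coefficient (times `γ_h'/g` or `1/g` for the chain rule through `τ`)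
times a profile bounded on `[0, 1]`, so `‖∇w_h‖ ≲ 1/g²` on the fibre, and
`g^{3/2} (∫₀^g ‖∇w_h‖²)^{1/2} ≲ g^{3/2} (g · g⁻⁴)^{1/2} = 1`.
-/

noncomputable def smoothstep (t : ℝ) : ℝ := t ^ 2 * (3 - 2 * t)

noncomputable def smoothstepDeriv (t : ℝ) : ℝ := 6 * t * (1 - t)

theorem hasDerivAt_smoothstep (t : ℝ) : HasDerivAt smoothstep (smoothstepDeriv t) t := by
  have := ((hasDerivAt_pow 2 t).mul (((hasDerivAt_id t).const_mul 2).const_sub 3))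
  exact this.congr_deriv (by simp [smoothstepDeriv]; ring)

theorem hasDerivAt_smoothstepDeriv (t : ℝ) : HasDerivAt smoothstepDeriv (6 - 12 * t) t := by
  have := ((hasDerivAt_id t).const_mul 6).mul ((hasDerivAt_id t).const_sub 1)
  exact this.congr_deriv (by simp; ring)

theorem hasDerivAt_mul_smoothstepDeriv (t : ℝ) :
    HasDerivAt (fun τ => τ * smoothstepDeriv τ) (smoothstepDeriv t + t * (6 - 12 * t)) t :=
  ((hasDerivAt_id' t).mul (hasDerivAt_smoothstepDeriv t)).congr_deriv (by ring)

theorem smoothstep_profiles_abs_le {t : ℝ} (ht : t ∈ Icc 0 1) :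
    |smoothstep t| ≤ 6 ∧ |smoothstepDeriv t| ≤ 6 ∧ |6 - 12 * t| ≤ 6 ∧
      |t * smoothstepDeriv t| ≤ 6 ∧ |smoothstepDeriv t + t * (6 - 12 * t)| ≤ 6 := by
  obtain ⟨h0, h1⟩ := ht
  unfold smoothstep smoothstepDeriv
  refine ⟨?_, ?_, ?_, ?_, ?_⟩ <;> rw [abs_le] <;> constructor <;>
    nlinarith [mul_nonneg h0 (sub_nonneg.2 h1), mul_nonneg (mul_nonneg h0 h0) (sub_nonneg.2 h1)]

theorem div_sq_mul_eq_smoothstep (t g : ℝ) :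
    t ^ 2 / g ^ 2 * (3 - 2 * t / g) = smoothstep (t / g) := by
  rw [smoothstep]; ring

theorem HasDerivAt.mul_comp_div {A G a : ℝ → ℝ} {A' d a' s t : ℝ} (hA : HasDerivAt A A' s)
    (hG : HasDerivAt G d s) (hGs : G s ≠ 0) (ha : HasDerivAt a a' (t / G s)) :
    HasDerivAt (fun σ => A σ * a (t / G σ))
      (A' * a (t / G s) - A s * a' * (t / G s) * d / G s) s := by
  have hq : HasDerivAt (fun σ => t / G σ) ((0 * G s - t * d) / G s ^ 2) s :=
    (hasDerivAt_const s t).div hG hGs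
  refine (hA.mul (ha.comp s hq)).congr_deriv ?_
  rw [Function.comp_apply]
  field_simp
  ring

theorem HasDerivAt.comp_div_const {a : ℝ → ℝ} {a' t : ℝ} (g : ℝ)
    (ha : HasDerivAt a a' (t / g)) : HasDerivAt (fun τ => a (τ / g)) (a' / g) t :=
  (ha.comp t ((hasDerivAt_id' t).div_const g)).congr_deriv (by ring)

theorem abs_mul_sub_mul_div_le {A A' a a' τ d g c k : ℝ} (hg : 0 < g) (hA : |A| ≤ c / g)
    (hA' : |A'| ≤ c / g ^ 2) (hd : |d| ≤ c) (ha : |a| ≤ k) (ha' : |a'| ≤ k) (hτ : |τ| ≤ 1) :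
    |A' * a - A * a' * τ * d / g| ≤ c * k * (1 + c) / g ^ 2 := by
  have hc : 0 ≤ c := (abs_nonneg _).trans hd
  have hk : 0 ≤ k := (abs_nonneg _).trans ha
  calc |A' * a - A * a' * τ * d / g| ≤ |A'| * |a| + |A| * |a'| * |τ| * |d| / g := by
        refine (abs_sub _ _).trans ?_
        simp only [abs_mul, abs_div, abs_of_pos hg, le_refl]
    _ ≤ c / g ^ 2 * k + c / g * k * 1 * c / g := by gcongr
    _ = c * k * (1 + c) / g ^ 2 := by field_simp

theorem abs_mul_div_le {A a' g c k : ℝ} (hg : 0 < g) (hA : |A| ≤ c / g) (ha' : |a'| ≤ k) :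
    |A * (a' / g)| ≤ c * k / g ^ 2 := by
  have hk : 0 ≤ k := (abs_nonneg _).trans ha'
  have hc : 0 ≤ c / g := (abs_nonneg _).trans hA
  calc |A * (a' / g)| = |A| * |a'| / g := by
        rw [abs_mul, abs_div, abs_of_pos hg, mul_div_assoc]
    _ ≤ c / g * k / g := by gcongr
    _ = c * k / g ^ 2 := by field_simp

theorem ContinuousLinearMap.norm_le_norm_apply_fst_add_norm_apply_snd
    {E : Type*} [NormedAddCommGroup E] [NormedSpace ℝ E] (L : ℝ × ℝ →L[ℝ] E) :
    ‖L‖ ≤ ‖L (1, 0)‖ + ‖L (0, 1)‖ := by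
  refine L.opNorm_le_bound (by positivity) fun u => ?_
  have hu : L u = u.1 • L (1, 0) + u.2 • L (0, 1) := by
    rw [← L.map_smul, ← L.map_smul, ← map_add]
    congr 1
    ext <;> simp
  calc ‖L u‖ ≤ ‖u.1‖ * ‖L (1, 0)‖ + ‖u.2‖ * ‖L (0, 1)‖ := by
        rw [hu, ← norm_smul, ← norm_smul]; exact norm_add_le _ _
    _ ≤ ‖u‖ * ‖L (1, 0)‖ + ‖u‖ * ‖L (0, 1)‖ := by
        gcongr
        exacts [_root_.norm_fst_le u, _root_.norm_snd_le u]
    _ = (‖L (1, 0)‖ + ‖L (0, 1)‖) * ‖u‖ := by ring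

theorem norm_fderiv_le_norm_deriv_add_norm_deriv
    {E : Type*} [NormedAddCommGroup E] [NormedSpace ℝ E] (f : ℝ × ℝ → E) (a b : ℝ) :
    ‖fderiv ℝ f (a, b)‖ ≤ ‖deriv (fun s => f (s, b)) a‖ + ‖deriv (fun t => f (a, t)) b‖ := by
  by_cases hf : DifferentiableAt ℝ f (a, b)
  · have h₁ : HasDerivAt (fun s => f (s, b)) (fderiv ℝ f (a, b) (1, 0)) a :=
      hf.hasFDerivAt.comp_hasDerivAt a ((hasDerivAt_id a).prodMk (hasDerivAt_const a b))
    have h₂ : HasDerivAt (fun t => f (a, t)) (fderiv ℝ f (a, b) (0, 1)) b :=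
      hf.hasFDerivAt.comp_hasDerivAt b ((hasDerivAt_const b a).prodMk (hasDerivAt_id b))
    rw [h₁.deriv, h₂.deriv]
    exact ContinuousLinearMap.norm_le_norm_apply_fst_add_norm_apply_snd _
  · rw [fderiv_zero_of_not_differentiableAt hf, norm_zero]
    positivity

theorem rpow_three_halves_mul_integral_sq_rpow_le {f : ℝ → ℝ} {g E : ℝ} (hg : 0 < g)
    (hf : ∀ x ∈ Ioo 0 g, |f x| ≤ E / g ^ 2) :
    g ^ ((3:ℝ) / 2) * (∫ x in Ioo 0 g, f x ^ 2) ^ ((1:ℝ) / 2) ≤ E := by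
  have hE : 0 ≤ E := by
    have := mul_nonneg ((abs_nonneg _).trans (hf (g / 2) ⟨by positivity, by linarith⟩))
      (pow_pos hg 2).le
    rwa [div_mul_cancel₀ _ (by positivity)] at this
  have hsq : ∀ x ∈ Ioo 0 g, f x ^ 2 ≤ (E / g ^ 2) ^ 2 := fun x hx =>
    sq_le_sq' (abs_le.1 (hf x hx)).1 (abs_le.1 (hf x hx)).2
  have hint : ∫ x in Ioo 0 g, f x ^ 2 ≤ g * (E / g ^ 2) ^ 2 := by
    calc ∫ x in Ioo 0 g, f x ^ 2 ≤ ∫ _ in Ioo 0 g, (E / g ^ 2) ^ 2 :=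
          integral_mono_of_nonneg (.of_forall fun _ => sq_nonneg _) (integrableOn_const (by simp))
            (ae_restrict_of_forall_mem measurableSet_Ioo hsq)
      _ = g * (E / g ^ 2) ^ 2 := by simp [hg.le]
  have hI : 0 ≤ ∫ x in Ioo 0 g, f x ^ 2 :=
    setIntegral_nonneg measurableSet_Ioo fun _ _ => sq_nonneg _
  calc g ^ ((3:ℝ) / 2) * (∫ x in Ioo 0 g, f x ^ 2) ^ ((1:ℝ) / 2)
      = (g ^ 3 * ∫ x in Ioo 0 g, f x ^ 2) ^ ((1:ℝ) / 2) := by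
        rw [Real.mul_rpow (by positivity) hI, ← Real.rpow_natCast, ← Real.rpow_mul hg.le]
        norm_num
    _ ≤ (E ^ 2) ^ ((1:ℝ) / 2) := by
        gcongr
        calc g ^ 3 * ∫ x in Ioo 0 g, f x ^ 2 ≤ g ^ 3 * (g * (E / g ^ 2) ^ 2) := by gcongr
          _ = E ^ 2 := by field_simp
    _ = E := by
        rw [← Real.rpow_natCast, ← Real.rpow_mul hE]
        norm_num

/-- With `A = -(x₁ / G)` and `B = -(x₁ G' / G)` this is `∇⊥(x₁ smoothstep (x₂ / G x₁))`
(`rotGrad_mul_smoothstep_eq_streamField`); keeping `A`, `B` abstract separates the chain-rule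
computation from the estimates on the coefficients. -/
noncomputable def streamField (G A B : ℝ → ℝ) (x : ℝ × ℝ) : ℝ × ℝ :=
  (A x.1 * smoothstepDeriv (x.2 / G x.1),
    smoothstep (x.2 / G x.1) + B x.1 * (x.2 / G x.1 * smoothstepDeriv (x.2 / G x.1)))

theorem rotGrad_mul_smoothstep_eq_streamField {G A B : ℝ → ℝ} {d s t : ℝ}
    (hG : HasDerivAt G d s) (hGs : G s ≠ 0) (hA : A s = -(s / G s)) (hB : B s = -(s * d / G s)) :
    (-deriv (fun τ => s * smoothstep (τ / G s)) t, deriv (fun σ => σ * smoothstep (t / G σ)) s) =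
      streamField G A B (s, t) := by
  have h₁ := ((hasDerivAt_smoothstep (t / G s)).comp_div_const (G s)).const_mul s
  have h₂ := (hasDerivAt_id' s).mul_comp_div (t := t) hG hGs (hasDerivAt_smoothstep _)
  rw [h₁.deriv, h₂.deriv, streamField, hA, hB]
  ext
  · simp only
    ring
  · simp only
    field_simp
    ring

theorem norm_deriv_streamField_add_norm_deriv_le {G A B : ℝ → ℝ} {d A' B' x₁ x₂ c : ℝ}
    (hG : HasDerivAt G d x₁) (hA : HasDerivAt A A' x₁) (hB : HasDerivAt B B' x₁)
    (hg : 0 < G x₁) (hx₂ : x₂ ∈ Icc 0 (G x₁)) (hc : 1 ≤ c / G x₁) (hAc : |A x₁| ≤ c / G x₁)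
    (hBc : |B x₁| ≤ c / G x₁) (hA'c : |A'| ≤ c / G x₁ ^ 2) (hB'c : |B'| ≤ c / G x₁ ^ 2)
    (hd : |d| ≤ c) :
    ‖deriv (fun s => streamField G A B (s, x₂)) x₁‖ +
      ‖deriv (fun t => streamField G A B (x₁, t)) x₂‖ ≤ 36 * c * (1 + c) / G x₁ ^ 2 := by
  set g := G x₁
  set τ := x₂ / g
  have hτ : τ ∈ Icc 0 1 := ⟨div_nonneg hx₂.1 hg.le, div_le_one_of_le₀ hx₂.2 hg.le⟩
  have hτ₁ : |τ| ≤ 1 := abs_le.2 ⟨by linarith [hτ.1], hτ.2⟩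
  obtain ⟨hp, hp', hp'', hq, hq'⟩ := smoothstep_profiles_abs_le hτ
  have hs₁ := hA.mul_comp_div hG hg.ne' (hasDerivAt_smoothstepDeriv τ)
  have hs₂ : HasDerivAt (fun s => smoothstep (x₂ / G s))
      (0 * smoothstep τ - 1 * smoothstepDeriv τ * τ * d / g) x₁ := by
    simpa only [one_mul] using
      (hasDerivAt_const x₁ (1:ℝ)).mul_comp_div hG hg.ne' (hasDerivAt_smoothstep τ)
  have hs₃ := hB.mul_comp_div hG hg.ne' (hasDerivAt_mul_smoothstepDeriv τ)
  have ht₁ := ((hasDerivAt_smoothstepDeriv τ).comp_div_const g).const_mul (A x₁)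
  have ht₂ := (hasDerivAt_smoothstep τ).comp_div_const g
  have ht₃ := ((hasDerivAt_mul_smoothstepDeriv τ).comp_div_const g).const_mul (B x₁)
  rw [HasDerivAt.deriv (f := fun s => streamField G A B (s, x₂)) (hs₁.prodMk (hs₂.add hs₃)),
    HasDerivAt.deriv (f := fun t => streamField G A B (x₁, t)) (ht₁.prodMk (ht₂.add ht₃))]
  have hpair : ∀ u v w : ℝ, ‖(u, v + w)‖ ≤ |u| + |v| + |w| := fun u v w =>
    norm_prod_le_iff.2 ⟨by simp only [Real.norm_eq_abs]; linarith [abs_nonneg v, abs_nonneg w],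
      by simp only [Real.norm_eq_abs]; linarith [abs_nonneg u, abs_add_le v w]⟩
  have hc₀ : 0 ≤ c := (abs_nonneg _).trans hd
  have hone : |(1:ℝ)| ≤ c / g := by rwa [abs_one]
  have hzero : |(0:ℝ)| ≤ c / g ^ 2 := by rw [abs_zero]; positivity
  have hD₁ := abs_mul_sub_mul_div_le hg hAc hA'c hd hp' hp'' hτ₁
  have hD₂ := abs_mul_sub_mul_div_le hg hone hzero hd hp hp' hτ₁
  have hD₃ := abs_mul_sub_mul_div_le hg hBc hB'c hd hq hq' hτ₁
  have hE₁ := abs_mul_div_le hg hAc hp''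
  have hE₂ := abs_mul_div_le hg hone hp'
  have hE₃ := abs_mul_div_le hg hBc hq'
  rw [one_mul] at hE₂
  have hT : c * 6 / g ^ 2 ≤ c * 6 * (1 + c) / g ^ 2 :=
    div_le_div_of_nonneg_right (by nlinarith [mul_nonneg hc₀ hc₀]) (by positivity)
  refine (add_le_add (hpair _ _ _) (hpair _ _ _)).trans ?_
  have : 36 * c * (1 + c) / g ^ 2 = 6 * (c * 6 * (1 + c) / g ^ 2) := by ring
  linarith

/-- The paper's `γ_h`. -/
noncomputable def gap (α h s : ℝ) : ℝ := h + |s| ^ (1 + α)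

noncomputable def gapDeriv (α s : ℝ) : ℝ := (1 + α) * |s| ^ (1 + α - 2) * s

theorem gap_pos {α h : ℝ} (hh : 0 < h) (s : ℝ) : 0 < gap α h s :=
  add_pos_of_pos_of_nonneg hh (by positivity)

theorem hasDerivAt_gap {α : ℝ} (hα : 0 < α) (h s : ℝ) : HasDerivAt (gap α h) (gapDeriv α s) s :=
  (hasDerivAt_abs_rpow s (by linarith)).const_add h

theorem mul_gapDeriv (α s : ℝ) : s * gapDeriv α s = (1 + α) * |s| ^ (1 + α) := by
  rcases eq_or_ne (1 + α) 0 with hα | hα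
  · simp [gapDeriv, hα]
  · have h2 : (1 + α - 2) + 2 ≠ 0 := by rwa [sub_add_cancel]
    rw [gapDeriv, show s * ((1 + α) * |s| ^ (1 + α - 2) * s) =
        (1 + α) * (|s| ^ (1 + α - 2) * |s| ^ (2:ℝ)) by rw [Real.rpow_two, sq_abs]; ring,
      ← Real.rpow_add' (abs_nonneg s) h2, sub_add_cancel]

theorem hasDerivAt_mul_gapDeriv {α : ℝ} (hα : 0 < α) (s : ℝ) :
    HasDerivAt (fun σ => σ * gapDeriv α σ) ((1 + α) * gapDeriv α s) s := by
  simp only [mul_gapDeriv]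
  exact (hasDerivAt_abs_rpow s (by linarith)).const_mul (1 + α)

theorem abs_gapDeriv {α : ℝ} (hα : 0 < α) (s : ℝ) : |gapDeriv α s| = (1 + α) * |s| ^ α := by
  rcases eq_or_ne s 0 with rfl | hs
  · simp [gapDeriv, Real.zero_rpow hα.ne']
  · rw [gapDeriv, abs_mul, abs_mul, abs_of_pos (by linarith : 0 < 1 + α),
      abs_of_nonneg (by positivity), mul_assoc, ← Real.rpow_add_one (abs_ne_zero.2 hs)]
    ring_nf

noncomputable def gapStreamField (α h : ℝ) : ℝ × ℝ → ℝ × ℝ :=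
  streamField (gap α h) (fun s => -(s / gap α h s)) (fun s => -(s * gapDeriv α s / gap α h s))

theorem rotGrad_mul_smoothstep_eq_gapStreamField {α h : ℝ} (hα : 0 < α) (hh : 0 < h)
    (x : ℝ × ℝ) :
    (-deriv (fun t => x.1 * smoothstep (t / gap α h x.1)) x.2,
      deriv (fun s => s * smoothstep (x.2 / gap α h s)) x.1) = gapStreamField α h x :=
  rotGrad_mul_smoothstep_eq_streamField (hasDerivAt_gap hα h x.1) (gap_pos hh x.1).ne' rfl rfl

theorem norm_deriv_gapStreamField_add_norm_deriv_le {α h M x₁ x₂ : ℝ} (hα : α ∈ Ioc 0 1)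
    (hh : h ∈ Ioc 0 1) (hM : 1 ≤ M) (hx₁ : |x₁| ≤ M) (hx₂ : x₂ ∈ Icc 0 (gap α h x₁)) :
    ‖deriv (fun s => gapStreamField α h (s, x₂)) x₁‖ +
        ‖deriv (fun t => gapStreamField α h (x₁, t)) x₂‖ ≤
      36 * (4 * M * (1 + M ^ 2)) * (1 + 4 * M * (1 + M ^ 2)) / gap α h x₁ ^ 2 := by
  obtain ⟨hα₀, hα₁⟩ := hα
  set g := gap α h x₁ with hg_def
  set d := gapDeriv α x₁
  have hg : 0 < g := gap_pos hh.1 x₁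
  have hpow : |x₁| ^ (1 + α) ≤ M ^ 2 := by
    calc |x₁| ^ (1 + α) ≤ M ^ (1 + α) := by gcongr
      _ ≤ M ^ (2:ℝ) := Real.rpow_le_rpow_of_exponent_le hM (by linarith)
      _ = M ^ 2 := Real.rpow_two M
  have hgM : g ≤ 1 + M ^ 2 := by rw [hg_def, gap]; linarith [hh.2]
  have hQ : x₁ * d = (1 + α) * |x₁| ^ (1 + α) := mul_gapDeriv α x₁
  have hQ₀ : 0 ≤ x₁ * d := by rw [hQ]; positivity
  have hQg : x₁ * d ≤ (1 + α) * g := by rw [hQ, hg_def, gap]; nlinarith [hh.1]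
  have hd : |d| ≤ 2 * M := by
    have : |x₁| ^ α ≤ M := by
      calc |x₁| ^ α ≤ M ^ α := by gcongr
        _ ≤ M ^ (1:ℝ) := Real.rpow_le_rpow_of_exponent_le hM hα₁
        _ = M := Real.rpow_one M
    rw [abs_gapDeriv hα₀]
    nlinarith [Real.rpow_nonneg (abs_nonneg x₁) α]
  have hA : HasDerivAt (fun s => -(s / gap α h s)) (-((1 * g - x₁ * d) / g ^ 2)) x₁ :=
    ((hasDerivAt_id' x₁).div (hasDerivAt_gap hα₀ h x₁) hg.ne').neg
  have hB : HasDerivAt (fun s => -(s * gapDeriv α s / gap α h s))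
      (-(((1 + α) * d * g - x₁ * d * d) / g ^ 2)) x₁ :=
    ((hasDerivAt_mul_gapDeriv hα₀ x₁).div (hasDerivAt_gap hα₀ h x₁) hg.ne').neg
  apply norm_deriv_streamField_add_norm_deriv_le (hasDerivAt_gap hα₀ h x₁) hA hB hg hx₂
  · rw [le_div_iff₀ hg]; nlinarith
  · rw [abs_neg, abs_div, abs_of_pos hg]
    exact div_le_div_of_nonneg_right (by nlinarith) hg.le
  · rw [abs_neg, abs_div, abs_of_pos hg, abs_of_nonneg hQ₀]
    exact div_le_div_of_nonneg_right (by nlinarith) hg.le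
  · rw [abs_neg, abs_div, abs_of_pos (pow_pos hg 2)]
    refine div_le_div_of_nonneg_right ?_ (pow_pos hg 2).le
    rw [abs_le]; constructor <;> nlinarith
  · rw [abs_neg, abs_div, abs_of_pos (pow_pos hg 2),
      show (1 + α) * d * g - x₁ * d * d = d * ((1 + α) * g - x₁ * d) by ring, abs_mul]
    refine div_le_div_of_nonneg_right ?_ (pow_pos hg 2).le
    calc |d| * |(1 + α) * g - x₁ * d| ≤ (2 * M) * (2 * (1 + M ^ 2)) := by
          gcongr
          rw [abs_le]; constructor <;> nlinarith
      _ = 4 * M * (1 + M ^ 2) := by ring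
  · nlinarith

theorem gradient_test_function_fiberwise_bound_general (α δ : ℝ) (hα : α ∈ Ioc (0:ℝ) 1)
    (γ : ℝ → ℝ → ℝ) (hγ : ∀ h x₁, γ h x₁ = h + |x₁| ^ (1 + α))
    (φ : ℝ → ℝ × ℝ → ℝ)
    (hφ : ∀ h x, φ h x = x.2 ^ 2 / (γ h x.1) ^ 2 * (3 - 2 * x.2 / γ h x.1))
    (w : ℝ → ℝ × ℝ → ℝ × ℝ)
    (hw : ∀ h x, w h x =
      (-(deriv (fun t : ℝ => x.1 * φ h (x.1, t)) x.2),
        deriv (fun s : ℝ => s * φ h (s, x.2)) x.1)) :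
    ∃ C : ℝ, 0 < C ∧ ∃ h₀ : ℝ, 0 < h₀ ∧
      ∀ h ∈ Ioo (0:ℝ) h₀, ∀ x₁ ∈ Ioo (-δ) δ,
        (γ h x₁) ^ ((3:ℝ)/2) *
          (∫ x₂ in Ioo 0 (γ h x₁), ‖fderiv ℝ (w h) (x₁, x₂)‖ ^ 2) ^ ((1:ℝ)/2) ≤ C := by
  set M := max δ 1
  have hM : 1 ≤ M := le_max_right δ 1
  refine ⟨36 * (4 * M * (1 + M ^ 2)) * (1 + 4 * M * (1 + M ^ 2)), by positivity,
    1, one_pos, ?_⟩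
  rintro h ⟨hh₀, hh₁⟩ x₁ ⟨hx₁l, hx₁r⟩
  have hγh : γ h = gap α h := funext (hγ h)
  have hwh : w h = gapStreamField α h := by
    funext x
    simp only [hw, hφ, hγh, div_sq_mul_eq_smoothstep]
    exact rotGrad_mul_smoothstep_eq_gapStreamField hα.1 hh₀ x
  have hx₁ : |x₁| ≤ M := abs_le.2 ⟨by linarith [le_max_left δ 1], by linarith [le_max_left δ 1]⟩
  rw [hγh, hwh]
  refine rpow_three_halves_mul_integral_sq_rpow_le (gap_pos hh₀ x₁) fun x₂ hx₂ => ?_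
  rw [abs_norm]
  exact (norm_fderiv_le_norm_deriv_add_norm_deriv _ x₁ x₂).trans <|
    norm_deriv_gapStreamField_add_norm_deriv_le hα ⟨hh₀, hh₁.le⟩ hM hx₁ (Ioo_subset_Icc_self hx₂)

theorem gradient_test_function_fiberwise_bound (α δ : ℝ) (hα : α ∈ Ioc (0:ℝ) 1) (hδ : 0 < δ)
    (γ : ℝ → ℝ → ℝ) (hγ : ∀ h x₁, γ h x₁ = h + |x₁| ^ (1 + α))
    (φ : ℝ → ℝ × ℝ → ℝ)
    (hφ : ∀ h x, φ h x = x.2 ^ 2 / (γ h x.1) ^ 2 * (3 - 2 * x.2 / γ h x.1))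
    (w : ℝ → ℝ × ℝ → ℝ × ℝ)
    (hw : ∀ h x, w h x =
      (-(deriv (fun t : ℝ => x.1 * φ h (x.1, t)) x.2),
        deriv (fun s : ℝ => s * φ h (s, x.2)) x.1)) :
    ∃ C : ℝ, 0 < C ∧ ∃ h₀ : ℝ, 0 < h₀ ∧
      ∀ h ∈ Ioo (0:ℝ) h₀, ∀ x₁ ∈ Ioo (-δ) δ,
        (γ h x₁) ^ ((3:ℝ)/2) *
          (∫ x₂ in Ioo 0 (γ h x₁), ‖fderiv ℝ (w h) (x₁, x₂)‖ ^ 2) ^ ((1:ℝ)/2) ≤ C :=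
  gradient_test_function_fiberwise_bound_general α δ hα γ hγ φ hφ w hw
end
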